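/- Let E be a row-finite directed graph and let v ∈ E⁰ be a source (r⁻¹(v) = ∅) which is not a sink. Let E_{\v} be the graph obtained by restricting E to E⁰ \ {v} (its vertices are E⁰ \ {v} and its edges are the edges e of E with s(e) ≠ v). Then the map sending each generator u(i) of T_{E_{\v}} to u(i) in T_E is a ℤ-monoid isomorphism T_{E_{\v}} ≅ T_E. -/

import Mathlib

/-- A directed graph: a set of vertices `V`, a set of edges `Ed`,
and source and range maps. -/
structure DGraph (V : Type) (Ed : Type) where
  s : Ed → V
  r : Ed → V

namespace DGraph

variable {V Ed : Type} (G : DGraph V Ed)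

/-- A sink is a vertex emitting no edges. -/
def IsSink (v : V) : Prop := ∀ e : Ed, G.s e ≠ v

/-- A source is a vertex receiving no edges. -/
def IsSource (v : V) : Prop := ∀ e : Ed, G.r e ≠ v

/-- A graph is row-finite if every vertex emits finitely many edges. -/
def RowFinite : Prop := ∀ v : V, {e : Ed | G.s e = v}.Finite

theorem rowFinite_of_finite [Finite Ed] : G.RowFinite := fun _ => Set.toFinite _

/-- There is an edge from `u` to `w`. -/
def Step (u w : V) : Prop := ∃ e : Ed, G.s e = u ∧ G.r e = w

/-- `u` flows to `w`: `u = w` or there is a path from `u` to `w`. -/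
def FlowsTo (u w : V) : Prop := Relation.ReflTransGen G.Step u w

/-- Strongly connected graph. -/
def StronglyConnected : Prop := ∀ u w : V, G.FlowsTo u w

/-- A (finite) path of length `≥ 1`: a nonempty list of consecutive edges. -/
structure GPath (G : DGraph V Ed) where
  edges : List Ed
  ne : edges ≠ []
  chain : edges.Chain' (fun e f => G.r e = G.s f)

namespace GPath

variable {G}

/-- The source of a path. -/
def src (p : G.GPath) : V := G.s (p.edges.head p.ne)

/-- The range of a path. -/
def tgt (p : G.GPath) : V := G.r (p.edges.getLast p.ne)

/-- The length of a path. -/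
def length (p : G.GPath) : ℕ := p.edges.length

/-- The set of vertices of a path (the sources of its edges). -/
def vset (p : G.GPath) : Set V := {v | ∃ e ∈ p.edges, G.s e = v}

/-- A cycle: a closed path with pairwise distinct edges. -/
def IsCycle (p : G.GPath) : Prop := p.src = p.tgt ∧ p.edges.Nodup

/-- The path (cycle) has an exit: an edge `f` with `s f = s eᵢ` but `f ≠ eᵢ`. -/
def HasExit (p : G.GPath) : Prop := ∃ (f e : Ed), e ∈ p.edges ∧ G.s f = G.s e ∧ f ≠ e

/-- An extreme cycle: a cycle with an exit such that every path leaving it returns to it. -/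
def IsExtremeCycle (p : G.GPath) : Prop :=
  p.IsCycle ∧ p.HasExit ∧
    ∀ lam : G.GPath, lam.src ∈ p.vset → ∃ w ∈ p.vset, G.FlowsTo lam.tgt w

end GPath

/-- Lengths of closed paths based at `v`. -/
def closedLens (v : V) : Set ℕ :=
  {n | ∃ p : G.GPath, p.src = v ∧ p.tgt = v ∧ p.length = n}

/-- `d` is the period of `v`: the greatest common divisor of the lengths of closed
paths based at `v`. -/
def IsPeriodOf (d : ℕ) (v : V) : Prop :=
  (∀ n ∈ G.closedLens v, d ∣ n) ∧ ∀ k : ℕ, (∀ n ∈ G.closedLens v, k ∣ n) → k ∣ d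

/-- A line point: no vertex that `v` flows to has a bifurcation or lies on a closed path. -/
def LinePoint (v : V) : Prop :=
  ∀ w : V, G.FlowsTo v w →
    (∀ e f : Ed, G.s e = w → G.s f = w → e = f) ∧
      ¬ ∃ p : G.GPath, p.src = w ∧ p.tgt = w

end DGraph

section MonoidOrder

variable {M : Type} [AddCommMonoid M]

/-- The algebraic preorder on a commutative monoid: `a ≤ b` iff `a + c = b` for some `c`. -/
def MLe (a b : M) : Prop := ∃ c : M, a + c = b

/-- An order ideal of a commutative monoid. -/
structure IsOrderIdeal (I : Set M) : Prop where
  zero_mem : (0 : M) ∈ I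
  add_mem : ∀ {a b : M}, a ∈ I → b ∈ I → a + b ∈ I
  mem_of_le : ∀ {a b : M}, b ∈ I → MLe a b → a ∈ I

/-- The order ideal generated by an element `x`: all `y` with `y ≤ n • x` for some `n`. -/
def orderIdealGen (x : M) : Set M := {y | ∃ n : ℕ, MLe y (n • x)}

/-- A simple order ideal: a nonzero order ideal whose only order sub-ideals are `0` and itself. -/
def IsSimpleOrderIdeal (I : Set M) : Prop :=
  IsOrderIdeal I ∧ I ≠ {0} ∧ ∀ J : Set M, IsOrderIdeal J → J ⊆ I → J = {0} ∨ J = I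

/-- The nonzero elements of `I` form a group under addition. -/
def NonzeroGroup (I : Set M) : Prop :=
  (∀ x ∈ I, ∀ y ∈ I, x ≠ 0 → y ≠ 0 → x + y ≠ 0) ∧
    ∃ e ∈ I, e ≠ (0 : M) ∧ (∀ x ∈ I, x ≠ 0 → e + x = x) ∧
      ∀ x ∈ I, x ≠ 0 → ∃ y ∈ I, y ≠ 0 ∧ x + y = e

/-- The congruence on a commutative monoid associated to an ideal `I`:
`a ≈ b` iff `a + c = b + d` for some `c, d ∈ I`. -/
def idealCon (I : Set M) (h0 : (0 : M) ∈ I)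
    (hadd : ∀ {a b : M}, a ∈ I → b ∈ I → a + b ∈ I) : AddCon M where
  r a b := ∃ c ∈ I, ∃ d ∈ I, a + c = b + d
  iseqv := by
    refine ⟨fun a => ⟨0, h0, 0, h0, rfl⟩, ?_, ?_⟩
    · rintro a b ⟨c, hc, d, hd, h⟩
      exact ⟨d, hd, c, hc, h.symm⟩
    · rintro a b c ⟨x, hx, y, hy, h1⟩ ⟨x', hx', y', hy', h2⟩
      refine ⟨x + x', hadd hx hx', y' + y, hadd hy' hy, ?_⟩
      calc a + (x + x') = (a + x) + x' := (add_assoc _ _ _).symm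
        _ = (b + y) + x' := by rw [h1]
        _ = (b + x') + y := by rw [add_right_comm]
        _ = (c + y') + y := by rw [h2]
        _ = c + (y' + y) := add_assoc _ _ _
  add' := by
    rintro a b a' b' ⟨c, hc, d, hd, h1⟩ ⟨c', hc', d', hd', h2⟩
    refine ⟨c + c', hadd hc hc', d + d', hadd hd hd', ?_⟩
    rw [add_add_add_comm, h1, h2, add_add_add_comm]

end MonoidOrder

namespace DGraph

variable {V Ed : Type} (G : DGraph V Ed)

/-- The defining relations of the talented monoid, as a relation on the free
commutative monoid on `E⁰ × ℤ`. -/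
def talRel (hrf : G.RowFinite) (a b : (V × ℤ) →₀ ℕ) : Prop :=
  ∃ (v : V) (i : ℤ), ¬ G.IsSink v ∧ a = Finsupp.single (v, i) 1 ∧
    b = ∑ e ∈ (hrf v).toFinset, Finsupp.single (G.r e, i + 1) 1

/-- The congruence generated by the defining relations of the talented monoid. -/
noncomputable def talCon (hrf : G.RowFinite) : AddCon ((V × ℤ) →₀ ℕ) := addConGen (G.talRel hrf)

/-- The talented monoid `T_E` of a row-finite graph. -/
noncomputable def Tal (hrf : G.RowFinite) : Type := (G.talCon hrf).Quotient

noncomputable instance (hrf : G.RowFinite) : AddCommMonoid (G.Tal hrf) :=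
  inferInstanceAs (AddCommMonoid (G.talCon hrf).Quotient)

/-- The generator `v(i)` of the talented monoid. -/
noncomputable def gen (hrf : G.RowFinite) (v : V) (i : ℤ) : G.Tal hrf :=
  (G.talCon hrf).mk' (Finsupp.single (v, i) 1)

/-- The action of `n : ℤ` on the talented monoid, determined by `ⁿv(i) = v(i+n)`. -/
noncomputable def shift (hrf : G.RowFinite) (n : ℤ) : G.Tal hrf →+ G.Tal hrf :=
  AddCon.lift _
    ((AddCon.mk' _).comp
      (Finsupp.mapDomain.addMonoidHom (fun p : V × ℤ => (p.1, p.2 + n))))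
    (by
      refine AddCon.addConGen_le.mpr ?_
      rintro a b ⟨v, i, hv, rfl, rfl⟩
      show (G.talCon hrf).mk'
            (Finsupp.mapDomain (fun p : V × ℤ => (p.1, p.2 + n)) (Finsupp.single (v, i) 1)) =
          (G.talCon hrf).mk'
            (Finsupp.mapDomain (fun p : V × ℤ => (p.1, p.2 + n))
              (∑ e ∈ (hrf v).toFinset, Finsupp.single (G.r e, i + 1) 1))
      rw [Finsupp.mapDomain_single, Finsupp.mapDomain_finset_sum]
      simp only [Finsupp.mapDomain_single]
      refine (AddCon.eq (G.talCon hrf)).mpr ?_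
      refine AddConGen.Rel.of _ _ ⟨v, i + n, hv, rfl, ?_⟩
      exact Finset.sum_congr rfl fun e _ => by rw [add_right_comm])

end DGraph


namespace DGraph

variable {V Ed : Type} (G : DGraph V Ed)

/-- A ℤ-order ideal of the talented monoid: an order ideal closed under the ℤ-action. -/
def IsZOrderIdeal (hrf : G.RowFinite) (I : Set (G.Tal hrf)) : Prop :=
  IsOrderIdeal I ∧ ∀ (n : ℤ) (x : G.Tal hrf), x ∈ I → G.shift hrf n x ∈ I

/-- The ℤ-order ideal generated by a set `S`. -/
def zIdealGen (hrf : G.RowFinite) (S : Set (G.Tal hrf)) : Set (G.Tal hrf) :=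
  ⋂₀ {I : Set (G.Tal hrf) | G.IsZOrderIdeal hrf I ∧ S ⊆ I}

/-- A simple ℤ-order ideal: a nonzero ℤ-order ideal whose only ℤ-order sub-ideals
are `0` and itself. -/
def IsSimpleZIdeal (hrf : G.RowFinite) (I : Set (G.Tal hrf)) : Prop :=
  G.IsZOrderIdeal hrf I ∧ I ≠ {0} ∧
    ∀ J : Set (G.Tal hrf), G.IsZOrderIdeal hrf J → J ⊆ I → J = {0} ∨ J = I

/-- The adjacency matrix of a graph: the `(u, w)` entry is the number of edges
from `u` to `w`. -/
noncomputable def adj : Matrix V V ℕ := Matrix.of fun u w => Nat.card {e : Ed // G.s e = u ∧ G.r e = w}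

/-- The defining relations of the graph monoid `M_E`, as a relation on the free
commutative monoid on `E⁰`. -/
def gmRel (hrf : G.RowFinite) (a b : V →₀ ℕ) : Prop :=
  ∃ v : V, ¬ G.IsSink v ∧ a = Finsupp.single v 1 ∧
    b = ∑ e ∈ (hrf v).toFinset, Finsupp.single (G.r e) 1

/-- The graph monoid `M_E` of a row-finite graph. -/
noncomputable def GM (hrf : G.RowFinite) : Type := (addConGen (G.gmRel hrf)).Quotient

noncomputable instance (hrf : G.RowFinite) : AddCommMonoid (G.GM hrf) :=
  inferInstanceAs (AddCommMonoid (addConGen (G.gmRel hrf)).Quotient)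

/-- The smallest reflexive, transitive and additive relation on the free commutative
monoid on `E⁰` containing the defining relations of the graph monoid. -/
inductive FlowRel (hrf : G.RowFinite) : (V →₀ ℕ) → (V →₀ ℕ) → Prop
  | of {a b : V →₀ ℕ} : G.gmRel hrf a b → FlowRel hrf a b
  | refl (a : V →₀ ℕ) : FlowRel hrf a a
  | trans {a b c : V →₀ ℕ} : FlowRel hrf a b → FlowRel hrf b c → FlowRel hrf a c
  | add_right {a b : V →₀ ℕ} (c : V →₀ ℕ) : FlowRel hrf a b → FlowRel hrf (a + c) (b + c)

/-- The quotient of the talented monoid by a ℤ-order ideal. -/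
noncomputable def TalQuot (hrf : G.RowFinite) (I : Set (G.Tal hrf))
    (hI : G.IsZOrderIdeal hrf I) : Type :=
  (idealCon I hI.1.zero_mem (fun ha hb => hI.1.add_mem ha hb)).Quotient

noncomputable instance (hrf : G.RowFinite) (I : Set (G.Tal hrf))
    (hI : G.IsZOrderIdeal hrf I) : AddCommMonoid (G.TalQuot hrf I hI) :=
  inferInstanceAs
    (AddCommMonoid (idealCon I hI.1.zero_mem (fun ha hb => hI.1.add_mem ha hb)).Quotient)

/-- The ℤ-action descends to the quotient of the talented monoid by a ℤ-order ideal. -/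
noncomputable def qshift (hrf : G.RowFinite) (I : Set (G.Tal hrf))
    (hI : G.IsZOrderIdeal hrf I) (n : ℤ) : G.TalQuot hrf I hI →+ G.TalQuot hrf I hI :=
  AddCon.lift _
    ((AddCon.mk' (idealCon I hI.1.zero_mem (fun ha hb => hI.1.add_mem ha hb))).comp
      (G.shift hrf n))
    (by
      rintro a b ⟨c, hc, d, hd, h⟩
      show AddCon.ker _ _ _
      show (AddCon.mk' _) (G.shift hrf n a) = (AddCon.mk' _) (G.shift hrf n b)
      refine (AddCon.eq _).mpr ?_
      exact ⟨G.shift hrf n c, hI.2 n c hc, G.shift hrf n d, hI.2 n d hd, by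
        rw [← map_add, ← map_add, h]⟩)

end DGraph

set_option linter.unusedVariables false

section AuxLemmas

namespace DGraph

variable {V Ed : Type} (G : DGraph V Ed)

theorem gen_rel (hrf : G.RowFinite) {u : V} (hu : ¬ G.IsSink u) (i : ℤ) :
    G.gen hrf u i = ∑ e ∈ (hrf u).toFinset, G.gen hrf (G.r e) (i + 1) := by
  have hms : ((G.talCon hrf).mk' : ((V × ℤ) →₀ ℕ) →+ G.Tal hrf)
        (∑ e ∈ (hrf u).toFinset, Finsupp.single (G.r e, i + 1) 1) =
      ∑ e ∈ (hrf u).toFinset, G.gen hrf (G.r e) (i + 1) :=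
    map_sum _ _ _
  rw [← hms]
  exact (AddCon.eq _).mpr (AddConGen.Rel.of _ _ ⟨u, i, hu, rfl, rfl⟩)

theorem shift_gen (hrf : G.RowFinite) (n : ℤ) (u : V) (i : ℤ) :
    G.shift hrf n (G.gen hrf u i) = G.gen hrf u (i + n) := by
  show (G.talCon hrf).lift _ _ ((G.talCon hrf).mk' _) = _
  show (G.talCon hrf).mk'
      (Finsupp.mapDomain (fun p : V × ℤ => (p.1, p.2 + n)) (Finsupp.single (u, i) 1)) = _
  rw [Finsupp.mapDomain_single]
  rfl

theorem tal_hom_ext {N : Type} [AddCommMonoid N] (hrf : G.RowFinite)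
    (F H : G.Tal hrf →+ N)
    (h : ∀ u i, F (G.gen hrf u i) = H (G.gen hrf u i)) : ∀ x, F x = H x := by
  have key : F.comp ((G.talCon hrf).mk') = H.comp ((G.talCon hrf).mk') := by
    refine Finsupp.addHom_ext fun p m => ?_
    have hsing : (Finsupp.single p m : (V × ℤ) →₀ ℕ) = m • Finsupp.single p 1 := by
      rw [Finsupp.smul_single, smul_eq_mul, mul_one]
    simp only [AddMonoidHom.comp_apply, hsing, map_nsmul]
    obtain ⟨u, i⟩ := p
    exact congrArg (m • ·) (h u i)
  intro x
  obtain ⟨a, rfl⟩ := AddCon.mk'_surjective x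
  exact DFunLike.congr_fun key a

end DGraph

section Removal

open DGraph

theorem mem_aux {V Ed : Type} (G : DGraph V Ed) (hrf : G.RowFinite) (v : V)
    (hsource : G.IsSource v)
    (G' : DGraph {u : V // u ≠ v} {e : Ed // G.s e ≠ v})
    (hs' : ∀ e : {e : Ed // G.s e ≠ v}, ((G'.s e : {u : V // u ≠ v}) : V) = G.s e.1)
    (hr' : ∀ e : {e : Ed // G.s e ≠ v}, ((G'.r e : {u : V // u ≠ v}) : V) = G.r e.1)
    (hrf' : G'.RowFinite) (u : {u : V // u ≠ v}) (e : {e : Ed // G.s e ≠ v}) :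
    e ∈ (hrf' u).toFinset ↔ e.1 ∈ (hrf u.1).toFinset := by
  simp only [Set.Finite.mem_toFinset, Set.mem_setOf_eq]
  constructor
  · intro h; rw [← hs' e, h]
  · intro h; exact Subtype.ext (by rw [hs' e, h])

theorem sink_aux {V Ed : Type} (G : DGraph V Ed) (hrf : G.RowFinite) (v : V)
    (hsource : G.IsSource v)
    (G' : DGraph {u : V // u ≠ v} {e : Ed // G.s e ≠ v})
    (hs' : ∀ e : {e : Ed // G.s e ≠ v}, ((G'.s e : {u : V // u ≠ v}) : V) = G.s e.1)
    (hr' : ∀ e : {e : Ed // G.s e ≠ v}, ((G'.r e : {u : V // u ≠ v}) : V) = G.r e.1)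
    (hrf' : G'.RowFinite) (u : {u : V // u ≠ v}) (hu : ¬ G'.IsSink u) : ¬ G.IsSink u.1 := by
  intro hk
  exact hu fun e he => hk e.1 (by rw [← hs' e, he])

theorem sink_aux' {V Ed : Type} (G : DGraph V Ed) (hrf : G.RowFinite) (v : V)
    (hsource : G.IsSource v)
    (G' : DGraph {u : V // u ≠ v} {e : Ed // G.s e ≠ v})
    (hs' : ∀ e : {e : Ed // G.s e ≠ v}, ((G'.s e : {u : V // u ≠ v}) : V) = G.s e.1)
    (hr' : ∀ e : {e : Ed // G.s e ≠ v}, ((G'.r e : {u : V // u ≠ v}) : V) = G.r e.1)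
    (hrf' : G'.RowFinite) (u : {u : V // u ≠ v}) (hu : ¬ G.IsSink u.1) : ¬ G'.IsSink u := by
  intro hk
  apply hu
  intro e he
  exact hk ⟨e, fun hv0 => u.2 (he ▸ hv0 ▸ rfl)⟩ (Subtype.ext (by rw [hs']; exact he))

/-- Reindexing sums over edge sets. -/
theorem sum_aux {N : Type} [AddCommMonoid N] {V Ed : Type} (G : DGraph V Ed) (hrf : G.RowFinite) (v : V)
    (hsource : G.IsSource v)
    (G' : DGraph {u : V // u ≠ v} {e : Ed // G.s e ≠ v})
    (hs' : ∀ e : {e : Ed // G.s e ≠ v}, ((G'.s e : {u : V // u ≠ v}) : V) = G.s e.1)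
    (hr' : ∀ e : {e : Ed // G.s e ≠ v}, ((G'.r e : {u : V // u ≠ v}) : V) = G.r e.1)
    (hrf' : G'.RowFinite) (u : {u : V // u ≠ v})
    (f : {e : Ed // G.s e ≠ v} → N) (g : Ed → N)
    (hfg : ∀ e, f e = g e.1) :
    ∑ e ∈ (hrf' u).toFinset, f e = ∑ e ∈ (hrf u.1).toFinset, g e := by
  refine Finset.sum_bij' (fun e _ => (e.1 : Ed))
    (fun e he => (⟨e, fun hv0 => u.2 ((((hrf u.1).mem_toFinset.mp he)).symm.trans hv0)⟩ :
      {e : Ed // G.s e ≠ v}))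
    (fun e he => (mem_aux G hrf v hsource G' hs' hr' hrf' u e).mp he)
    (fun e he => (mem_aux G hrf v hsource G' hs' hr' hrf' u _).mpr he)
    (fun e he => rfl) (fun e he => rfl) (fun e he => hfg e)

/-- The forward homomorphism `T_{E'} → T_E`. -/
noncomputable def PhiMap {V Ed : Type} (G : DGraph V Ed) (hrf : G.RowFinite) (v : V)
    (hsource : G.IsSource v)
    (G' : DGraph {u : V // u ≠ v} {e : Ed // G.s e ≠ v})
    (hs' : ∀ e : {e : Ed // G.s e ≠ v}, ((G'.s e : {u : V // u ≠ v}) : V) = G.s e.1)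
    (hr' : ∀ e : {e : Ed // G.s e ≠ v}, ((G'.r e : {u : V // u ≠ v}) : V) = G.r e.1)
    (hrf' : G'.RowFinite) : G'.Tal hrf' →+ G.Tal hrf :=
  AddCon.lift _
    ((AddCon.mk' (G.talCon hrf)).comp
      (Finsupp.mapDomain.addMonoidHom (fun p : {u : V // u ≠ v} × ℤ => (p.1.1, p.2))))
    (by
      refine AddCon.addConGen_le.mpr ?_
      rintro a b ⟨u, i, hu, rfl, rfl⟩
      show (G.talCon hrf).mk'
            (Finsupp.mapDomain (fun p : {u : V // u ≠ v} × ℤ => (p.1.1, p.2))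
              (Finsupp.single (u, i) 1)) =
          (G.talCon hrf).mk'
            (Finsupp.mapDomain (fun p : {u : V // u ≠ v} × ℤ => (p.1.1, p.2))
              (∑ e ∈ (hrf' u).toFinset, Finsupp.single (G'.r e, i + 1) 1))
      rw [Finsupp.mapDomain_single, Finsupp.mapDomain_finset_sum]
      simp only [Finsupp.mapDomain_single]
      rw [sum_aux G hrf v hsource G' hs' hr' hrf' u
        (fun e => Finsupp.single (((G'.r e : {u : V // u ≠ v}) : V), i + 1) 1)
        (fun e => Finsupp.single (G.r e, i + 1) 1) (fun e => by simp only [hr'])]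
      exact (AddCon.eq _).mpr
        (AddConGen.Rel.of _ _ ⟨u.1, i, sink_aux G hrf v hsource G' hs' hr' hrf' u hu, rfl, rfl⟩))

theorem PhiMap_gen {V Ed : Type} (G : DGraph V Ed) (hrf : G.RowFinite) (v : V)
    (hsource : G.IsSource v)
    (G' : DGraph {u : V // u ≠ v} {e : Ed // G.s e ≠ v})
    (hs' : ∀ e : {e : Ed // G.s e ≠ v}, ((G'.s e : {u : V // u ≠ v}) : V) = G.s e.1)
    (hr' : ∀ e : {e : Ed // G.s e ≠ v}, ((G'.r e : {u : V // u ≠ v}) : V) = G.r e.1)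
    (hrf' : G'.RowFinite) (u : {u : V // u ≠ v}) (i : ℤ) :
    PhiMap G hrf v hsource G' hs' hr' hrf' (G'.gen hrf' u i) = G.gen hrf u.1 i := by
  show (G'.talCon hrf').lift _ _ ((G'.talCon hrf').mk' _) = _
  show (G.talCon hrf).mk'
      (Finsupp.mapDomain (fun p : {u : V // u ≠ v} × ℤ => (p.1.1, p.2))
        (Finsupp.single (u, i) 1)) = _
  rw [Finsupp.mapDomain_single]
  rfl

open Classical in
/-- The map on generators for the inverse homomorphism. -/
noncomputable def psiFun {V Ed : Type} (G : DGraph V Ed) (hrf : G.RowFinite) (v : V)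
    (hsource : G.IsSource v)
    (G' : DGraph {u : V // u ≠ v} {e : Ed // G.s e ≠ v})
    (hs' : ∀ e : {e : Ed // G.s e ≠ v}, ((G'.s e : {u : V // u ≠ v}) : V) = G.s e.1)
    (hr' : ∀ e : {e : Ed // G.s e ≠ v}, ((G'.r e : {u : V // u ≠ v}) : V) = G.r e.1)
    (hrf' : G'.RowFinite) : V × ℤ → G'.Tal hrf' := fun p =>
  if h : p.1 = v then
    ∑ e ∈ (hrf v).toFinset, G'.gen hrf' ⟨G.r e, fun hh => hsource e hh⟩ (p.2 + 1)
  else G'.gen hrf' ⟨p.1, h⟩ p.2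

theorem psiFun_ne {V Ed : Type} (G : DGraph V Ed) (hrf : G.RowFinite) (v : V)
    (hsource : G.IsSource v)
    (G' : DGraph {u : V // u ≠ v} {e : Ed // G.s e ≠ v})
    (hs' : ∀ e : {e : Ed // G.s e ≠ v}, ((G'.s e : {u : V // u ≠ v}) : V) = G.s e.1)
    (hr' : ∀ e : {e : Ed // G.s e ≠ v}, ((G'.r e : {u : V // u ≠ v}) : V) = G.r e.1)
    (hrf' : G'.RowFinite) (u : V) (h : u ≠ v) (i : ℤ) :
    psiFun G hrf v hsource G' hs' hr' hrf' (u, i) = G'.gen hrf' ⟨u, h⟩ i := by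
  unfold psiFun
  exact dif_neg h

theorem psiFun_v {V Ed : Type} (G : DGraph V Ed) (hrf : G.RowFinite) (v : V)
    (hsource : G.IsSource v)
    (G' : DGraph {u : V // u ≠ v} {e : Ed // G.s e ≠ v})
    (hs' : ∀ e : {e : Ed // G.s e ≠ v}, ((G'.s e : {u : V // u ≠ v}) : V) = G.s e.1)
    (hr' : ∀ e : {e : Ed // G.s e ≠ v}, ((G'.r e : {u : V // u ≠ v}) : V) = G.r e.1)
    (hrf' : G'.RowFinite) (i : ℤ) :
    psiFun G hrf v hsource G' hs' hr' hrf' (v, i) =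
      ∑ e ∈ (hrf v).toFinset, G'.gen hrf' ⟨G.r e, fun hh => hsource e hh⟩ (i + 1) := by
  unfold psiFun
  exact dif_pos rfl

/-- The free lift of `psiFun`. -/
noncomputable def psiFree {V Ed : Type} (G : DGraph V Ed) (hrf : G.RowFinite) (v : V)
    (hsource : G.IsSource v)
    (G' : DGraph {u : V // u ≠ v} {e : Ed // G.s e ≠ v})
    (hs' : ∀ e : {e : Ed // G.s e ≠ v}, ((G'.s e : {u : V // u ≠ v}) : V) = G.s e.1)
    (hr' : ∀ e : {e : Ed // G.s e ≠ v}, ((G'.r e : {u : V // u ≠ v}) : V) = G.r e.1)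
    (hrf' : G'.RowFinite) : ((V × ℤ) →₀ ℕ) →+ G'.Tal hrf' :=
  Finsupp.liftAddHom fun p => multiplesHom _ (psiFun G hrf v hsource G' hs' hr' hrf' p)

theorem psiFree_single {V Ed : Type} (G : DGraph V Ed) (hrf : G.RowFinite) (v : V)
    (hsource : G.IsSource v)
    (G' : DGraph {u : V // u ≠ v} {e : Ed // G.s e ≠ v})
    (hs' : ∀ e : {e : Ed // G.s e ≠ v}, ((G'.s e : {u : V // u ≠ v}) : V) = G.s e.1)
    (hr' : ∀ e : {e : Ed // G.s e ≠ v}, ((G'.r e : {u : V // u ≠ v}) : V) = G.r e.1)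
    (hrf' : G'.RowFinite) (p : V × ℤ) :
    psiFree G hrf v hsource G' hs' hr' hrf' (Finsupp.single p 1) = psiFun G hrf v hsource G' hs' hr' hrf' p := by
  rw [psiFree, Finsupp.liftAddHom_apply_single, multiplesHom_apply, one_nsmul]

/-- The inverse homomorphism `T_E → T_{E'}`. -/
noncomputable def PsiMap {V Ed : Type} (G : DGraph V Ed) (hrf : G.RowFinite) (v : V)
    (hsource : G.IsSource v)
    (G' : DGraph {u : V // u ≠ v} {e : Ed // G.s e ≠ v})
    (hs' : ∀ e : {e : Ed // G.s e ≠ v}, ((G'.s e : {u : V // u ≠ v}) : V) = G.s e.1)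
    (hr' : ∀ e : {e : Ed // G.s e ≠ v}, ((G'.r e : {u : V // u ≠ v}) : V) = G.r e.1)
    (hrf' : G'.RowFinite) : G.Tal hrf →+ G'.Tal hrf' :=
  AddCon.lift _ (psiFree G hrf v hsource G' hs' hr' hrf')
    (by
      refine AddCon.addConGen_le.mpr ?_
      rintro a b ⟨u, i, hu, rfl, rfl⟩
      show (psiFree G hrf v hsource G' hs' hr' hrf') _ = (psiFree G hrf v hsource G' hs' hr' hrf') _
      rw [map_sum]
      simp only [psiFree_single]
      by_cases h : u = v
      · subst h
        rw [psiFun_v G hrf u hsource G' hs' hr' hrf']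
        refine Finset.sum_congr rfl fun e he => ?_
        rw [psiFun_ne G hrf u hsource G' hs' hr' hrf' (G.r e) (fun hh => hsource e hh) (i + 1)]
      · rw [psiFun_ne G hrf v hsource G' hs' hr' hrf' u h i,
          G'.gen_rel hrf' (sink_aux' G hrf v hsource G' hs' hr' hrf' ⟨u, h⟩ hu) i]
        refine sum_aux G hrf v hsource G' hs' hr' hrf' ⟨u, h⟩
          (fun e => G'.gen hrf' (G'.r e) (i + 1))
          (fun e => psiFun G hrf v hsource G' hs' hr' hrf' (G.r e, i + 1)) fun e => ?_
        show G'.gen hrf' (G'.r e) (i + 1) = psiFun G hrf v hsource G' hs' hr' hrf' (G.r e.1, i + 1)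
        rw [psiFun_ne G hrf v hsource G' hs' hr' hrf' (G.r e.1) (fun hh => hsource e.1 hh) (i + 1)]
        exact congrArg (fun w => G'.gen hrf' w (i + 1)) (Subtype.ext (hr' e)))

theorem PsiMap_gen {V Ed : Type} (G : DGraph V Ed) (hrf : G.RowFinite) (v : V)
    (hsource : G.IsSource v)
    (G' : DGraph {u : V // u ≠ v} {e : Ed // G.s e ≠ v})
    (hs' : ∀ e : {e : Ed // G.s e ≠ v}, ((G'.s e : {u : V // u ≠ v}) : V) = G.s e.1)
    (hr' : ∀ e : {e : Ed // G.s e ≠ v}, ((G'.r e : {u : V // u ≠ v}) : V) = G.r e.1)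
    (hrf' : G'.RowFinite) (u : V) (i : ℤ) :
    PsiMap G hrf v hsource G' hs' hr' hrf' (G.gen hrf u i) = psiFun G hrf v hsource G' hs' hr' hrf' (u, i) := by
  show (G.talCon hrf).lift _ _ ((G.talCon hrf).mk' _) = _
  exact psiFree_single G hrf v hsource G' hs' hr' hrf' (u, i)

end Removal


/-- Removing a source `v` which is not a sink from a row-finite graph does
not change the talented monoid: the map `u(i) ↦ u(i)` is a ℤ-monoid isomorphism
`T_{E \ v} ≅ T_E`. -/
theorem statement1 {V Ed : Type} (G : DGraph V Ed) (hrf : G.RowFinite) (v : V)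
    (hsource : G.IsSource v) (hnotsink : ¬ G.IsSink v)
    (G' : DGraph {u : V // u ≠ v} {e : Ed // G.s e ≠ v})
    (hs' : ∀ e : {e : Ed // G.s e ≠ v}, ((G'.s e : {u : V // u ≠ v}) : V) = G.s e.1)
    (hr' : ∀ e : {e : Ed // G.s e ≠ v}, ((G'.r e : {u : V // u ≠ v}) : V) = G.r e.1)
    (hrf' : G'.RowFinite) :
    ∃ φ : G'.Tal hrf' ≃+ G.Tal hrf,
      (∀ (n : ℤ) (x : G'.Tal hrf'), φ (G'.shift hrf' n x) = G.shift hrf n (φ x)) ∧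
        ∀ (u : {u : V // u ≠ v}) (i : ℤ), φ (G'.gen hrf' u i) = G.gen hrf u.1 i := by
  classical
  have hΦgen := PhiMap_gen G hrf v hsource G' hs' hr' hrf'
  have hΨgen := PsiMap_gen G hrf v hsource G' hs' hr' hrf'
  have hri : ∀ x, PhiMap G hrf v hsource G' hs' hr' hrf'
      (PsiMap G hrf v hsource G' hs' hr' hrf' x) = x := by
    refine G.tal_hom_ext hrf
      ((PhiMap G hrf v hsource G' hs' hr' hrf').comp (PsiMap G hrf v hsource G' hs' hr' hrf'))
      (AddMonoidHom.id _) (fun u i => ?_)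
    simp only [AddMonoidHom.comp_apply, AddMonoidHom.id_apply]
    rw [hΨgen u i]
    by_cases h : u = v
    · subst h
      rw [psiFun_v G hrf u hsource G' hs' hr' hrf', map_sum]
      simp only [hΦgen]
      exact (G.gen_rel hrf hnotsink i).symm
    · rw [psiFun_ne G hrf v hsource G' hs' hr' hrf' u h i, hΦgen ⟨u, h⟩ i]
  have hli : ∀ x, PsiMap G hrf v hsource G' hs' hr' hrf'
      (PhiMap G hrf v hsource G' hs' hr' hrf' x) = x := by
    refine G'.tal_hom_ext hrf'
      ((PsiMap G hrf v hsource G' hs' hr' hrf').comp (PhiMap G hrf v hsource G' hs' hr' hrf'))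
      (AddMonoidHom.id _) (fun u i => ?_)
    simp only [AddMonoidHom.comp_apply, AddMonoidHom.id_apply]
    rw [hΦgen u i, hΨgen u.1 i, psiFun_ne G hrf v hsource G' hs' hr' hrf' u.1 u.2 i]
  refine ⟨{ toFun := PhiMap G hrf v hsource G' hs' hr' hrf',
            invFun := PsiMap G hrf v hsource G' hs' hr' hrf',
            left_inv := hli, right_inv := hri,
            map_add' := (PhiMap G hrf v hsource G' hs' hr' hrf').map_add }, ?_, ?_⟩
  · intro n x
    exact G'.tal_hom_ext hrf'
      ((PhiMap G hrf v hsource G' hs' hr' hrf').comp (G'.shift hrf' n))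
      ((G.shift hrf n).comp (PhiMap G hrf v hsource G' hs' hr' hrf'))
      (fun u i => by
        simp only [AddMonoidHom.comp_apply]
        rw [G'.shift_gen hrf' n u i, hΦgen u (i + n), hΦgen u i,
          G.shift_gen hrf n u.1 i]) x
  · exact fun u i => hΦgen u i
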